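/- Let G be a connected simple graph and c a 2-coloring of its edges. For any two vertices u and v of G, the minimal number of color changes over all walks in G from u to v equals the minimal distance in the component graph Comp(G,c) between a monochromatic component containing u and a monochromatic component containing v. -/

import Mathlib

open SimpleGraph

variable {V : Type*}

/-- The spanning subgraph of `G` consisting of the edges of color `t`. -/
def monoSubgraph (G : SimpleGraph V) (c : Sym2 V → Bool) (t : Bool) : SimpleGraph V where
  Adj u v := G.Adj u v ∧ c s(u, v) = t
  symm := ⟨fun u v h => ⟨h.1.symm, by rw [Sym2.eq_swap]; exact h.2⟩⟩
  loopless := ⟨fun u h => G.loopless.irrefl u h.1⟩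

/-- A monochromatic component of `(G, c)`: a color together with a connected component
of the spanning subgraph of edges of that color. -/
abbrev MonoComp (G : SimpleGraph V) (c : Sym2 V → Bool) :=
  Σ t : Bool, (monoSubgraph G c t).ConnectedComponent

/-- The vertex `x` belongs to the monochromatic component `a`. -/
def MonoComp.Mem {G : SimpleGraph V} {c : Sym2 V → Bool} (a : MonoComp G c) (x : V) : Prop :=
  (monoSubgraph G c a.1).connectedComponentMk x = a.2

/-- The component graph `Comp(G, c)`: vertices are the monochromatic components,
two of them adjacent iff they are distinct and share a vertex of `G`. -/
def compGraph (G : SimpleGraph V) (c : Sym2 V → Bool) : SimpleGraph (MonoComp G c) where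
  Adj a b := a ≠ b ∧ ∃ x : V, a.Mem x ∧ b.Mem x
  symm := ⟨fun a b h => ⟨h.1.symm, h.2.imp fun x hx => ⟨hx.2, hx.1⟩⟩⟩
  loopless := ⟨fun a h => h.1 rfl⟩

/-- The number of color changes along a list of edges: the number of consecutive
pairs receiving different colors. -/
def colorChanges (c : Sym2 V → Bool) : List (Sym2 V) → ℕ
  | e₁ :: e₂ :: rest => (if c e₁ = c e₂ then 0 else 1) + colorChanges c (e₂ :: rest)
  | _ => 0

/-!
A walk in `G` splits into maximal monochromatic segments. Each segment lies in one
monochromatic component, and consecutive segments lie in components of different colors that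
share the vertex where the color changes, so they are adjacent in `Comp(G, c)`: a walk with `k`
color changes yields a walk of length `k` in `Comp(G, c)`. Conversely, along a walk of
`Comp(G, c)` one threads a walk of `G` through shared vertices of consecutive components, staying
inside each component with edges of its color, so each step costs at most one color change.
Connectivity of `G` makes any two monochromatic components reachable in `Comp(G, c)`, so their
distance is the length of some walk.
-/

theorem colorChanges_cons (c : Sym2 V → Bool) (e : Sym2 V) (l : List (Sym2 V)) :
    colorChanges c (e :: l) =
      (if c e = (l.head?.map c).getD (c e) then 0 else 1) + colorChanges c l := by
  cases l with
  | nil => simp [colorChanges]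
  | cons => simp only [colorChanges, List.head?_cons, Option.map_some, Option.getD_some]; congr

theorem colorChanges_eq_zero_of_forall_eq {c : Sym2 V → Bool} {t : Bool} :
    ∀ {l : List (Sym2 V)}, (∀ e ∈ l, c e = t) → colorChanges c l = 0
  | [], _ | [_], _ => rfl
  | e :: e' :: l, h => by
    have hl : colorChanges c (e' :: l) = 0 :=
      colorChanges_eq_zero_of_forall_eq fun x hx => h x (List.mem_cons_of_mem _ hx)
    simp [colorChanges, h e (by simp), h e' (by simp), hl]

theorem colorChanges_append_le (c : Sym2 V → Bool) :
    ∀ l₁ l₂ : List (Sym2 V),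
      colorChanges c (l₁ ++ l₂) ≤ colorChanges c l₁ + 1 + colorChanges c l₂
  | [], _ => by simp [colorChanges]
  | [_], [] => by simp [colorChanges]
  | [_], _ :: _ => by simp only [List.singleton_append, colorChanges]; split <;> omega
  | e :: e' :: l₁, l₂ => by
    have ih := colorChanges_append_le c (e' :: l₁) l₂
    simp only [List.cons_append, colorChanges] at ih ⊢
    split <;> omega

variable {G : SimpleGraph V} {c : Sym2 V → Bool}

theorem monoSubgraph_le (t : Bool) : monoSubgraph G c t ≤ G := fun _ _ h => h.1

theorem exists_walk_forall_color_eq_of_reachable {t : Bool} {x y : V}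
    (h : (monoSubgraph G c t).Reachable x y) : ∃ w : G.Walk x y, ∀ e ∈ w.edges, c e = t := by
  obtain ⟨p⟩ := h
  refine ⟨p.mapLe (monoSubgraph_le t), fun e he => ?_⟩
  rw [Walk.edges_mapLe_eq_edges] at he
  induction e using Sym2.ind with
  | _ x y => exact (p.edges_subset_edgeSet he).2

namespace MonoComp

def mk (t : Bool) (x : V) : MonoComp G c := ⟨t, (monoSubgraph G c t).connectedComponentMk x⟩

theorem mem_mk (t : Bool) (x : V) : (mk t x : MonoComp G c).Mem x := rfl

theorem mk_eq_mk_of_adj {t : Bool} {x y : V} (h : G.Adj x y) (hc : c s(x, y) = t) :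
    (mk t x : MonoComp G c) = mk t y :=
  congrArg (Sigma.mk t) <|
    ConnectedComponent.sound (Adj.reachable (G := monoSubgraph G c t) ⟨h, hc⟩)

theorem reachable_of_mem {a : MonoComp G c} {x y : V} (hx : a.Mem x) (hy : a.Mem y) :
    (monoSubgraph G c a.1).Reachable x y :=
  ConnectedComponent.exact (hx.trans hy.symm)

theorem compGraph_adj_mk_mk {t t' : Bool} (h : t ≠ t') (x : V) :
    (compGraph G c).Adj (mk t x) (mk t' x) :=
  ⟨fun heq => h (congrArg Sigma.fst heq), x, mem_mk t x, mem_mk t' x⟩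

theorem compGraph_reachable_of_mem_of_mem {a b : MonoComp G c} {x : V} (ha : a.Mem x)
    (hb : b.Mem x) : (compGraph G c).Reachable a b := by
  by_cases h : a = b
  · exact h ▸ Reachable.refl a
  · exact Adj.reachable ⟨h, x, ha, hb⟩

end MonoComp

open MonoComp

theorem exists_walk_colorChanges_le_length {a b : MonoComp G c} (P : (compGraph G c).Walk a b)
    {u v : V} (hu : a.Mem u) (hv : b.Mem v) :
    ∃ w : G.Walk u v, colorChanges c w.edges ≤ P.length := by
  induction P generalizing u with
  | nil =>
    obtain ⟨w, hw⟩ := exists_walk_forall_color_eq_of_reachable (reachable_of_mem hu hv)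
    exact ⟨w, by simp [colorChanges_eq_zero_of_forall_eq hw]⟩
  | cons hab P ih =>
    obtain ⟨-, x, hax, hbx⟩ := id hab
    obtain ⟨w₁, hw₁⟩ := exists_walk_forall_color_eq_of_reachable (reachable_of_mem hu hax)
    obtain ⟨w₂, hw₂⟩ := ih hbx hv
    refine ⟨w₁.append w₂, ?_⟩
    have h := colorChanges_append_le c w₁.edges w₂.edges
    rw [colorChanges_eq_zero_of_forall_eq hw₁] at h
    rw [Walk.edges_append, Walk.length_cons]
    omega

theorem exists_compGraph_walk_length_le_colorChanges {u v : V} (w : G.Walk u v) {t : Bool}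
    (ht : ∀ e ∈ w.edges.head?, c e = t) :
    ∃ b : MonoComp G c, b.Mem v ∧
      ∃ P : (compGraph G c).Walk (mk t u) b, P.length ≤ colorChanges c w.edges := by
  induction w generalizing t with
  | nil => exact ⟨_, mem_mk t _, .nil, Nat.zero_le _⟩
  | @cons u x v h p ih =>
    have hc : c s(u, x) = t := ht _ (by simp)
    obtain ⟨t', ht'⟩ : ∃ t', (p.edges.head?.map c).getD t = t' := ⟨_, rfl⟩
    obtain ⟨b, hb, P, hP⟩ := ih (t := t') (by
      intro e he
      simp [← ht', Option.mem_def.mp he])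
    rw [mk_eq_mk_of_adj h hc, Walk.edges_cons, colorChanges_cons, hc, ht']
    by_cases htt : t = t'
    · subst htt
      exact ⟨b, hb, P, by omega⟩
    · refine ⟨b, hb, .cons (compGraph_adj_mk_mk htt x) P, ?_⟩
      rw [if_neg htt, Walk.length_cons]
      omega

theorem exists_mem_mem_compGraph_walk_length_le {u v : V} (w : G.Walk u v) :
    ∃ a b : MonoComp G c, a.Mem u ∧ b.Mem v ∧
      ∃ P : (compGraph G c).Walk a b, P.length ≤ colorChanges c w.edges := by
  obtain ⟨b, hb, P, hP⟩ := exists_compGraph_walk_length_le_colorChanges (c := c) w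
    (t := (w.edges.head?.map c).getD true) (by
      intro e he
      simp [Option.mem_def.mp he])
  exact ⟨_, b, mem_mk _ u, hb, P, hP⟩

theorem exists_mem_mem_dist_le_colorChanges {u v : V} (w : G.Walk u v) :
    ∃ a b : MonoComp G c, a.Mem u ∧ b.Mem v ∧
      (compGraph G c).dist a b ≤ colorChanges c w.edges := by
  obtain ⟨a, b, ha, hb, P, hP⟩ := exists_mem_mem_compGraph_walk_length_le w
  exact ⟨a, b, ha, hb, (dist_le P).trans hP⟩

theorem compGraph_reachable_of_reachable {u v : V} (huv : G.Reachable u v) {a b : MonoComp G c}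
    (ha : a.Mem u) (hb : b.Mem v) : (compGraph G c).Reachable a b := by
  obtain ⟨w⟩ := huv
  obtain ⟨a', b', ha', hb', P, -⟩ := exists_mem_mem_compGraph_walk_length_le w
  exact (compGraph_reachable_of_mem_of_mem ha ha').trans
    (P.reachable.trans (compGraph_reachable_of_mem_of_mem hb' hb))

theorem exists_walk_colorChanges_le_dist {u v : V} (huv : G.Reachable u v) {a b : MonoComp G c}
    (ha : a.Mem u) (hb : b.Mem v) :
    ∃ w : G.Walk u v, colorChanges c w.edges ≤ (compGraph G c).dist a b := by
  obtain ⟨P, hP⟩ := (compGraph_reachable_of_reachable huv ha hb).exists_walk_length_eq_dist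
  exact hP ▸ exists_walk_colorChanges_le_length P ha hb

/-- In a connected graph `G` with 2-coloring `c`, the minimal number
of color changes over all walks from `u` to `v` equals the minimal distance in the
component graph between a monochromatic component containing `u` and one
containing `v`. -/
theorem min_colorChanges_eq_min_compGraph_dist
    {V : Type*} (G : SimpleGraph V) (hG : G.Connected) (c : Sym2 V → Bool) (u v : V) :
    sInf {n : ℕ | ∃ w : G.Walk u v, colorChanges c w.edges = n} =
      sInf {n : ℕ | ∃ a b : MonoComp G c,
        a.Mem u ∧ b.Mem v ∧ (compGraph G c).dist a b = n} := by
  apply le_antisymm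
  · obtain ⟨a, b, ha, hb, hab⟩ := Nat.sInf_mem (s := {n : ℕ | ∃ a b : MonoComp G c,
        a.Mem u ∧ b.Mem v ∧ (compGraph G c).dist a b = n})
      ⟨_, mk true u, mk true v, mem_mk true u, mem_mk true v, rfl⟩
    obtain ⟨w, hw⟩ := exists_walk_colorChanges_le_dist (hG.preconnected u v) ha hb
    exact le_trans (Nat.sInf_le ⟨w, rfl⟩) (hab ▸ hw)
  · obtain ⟨w, hw⟩ := Nat.sInf_mem
      (s := {n : ℕ | ∃ w : G.Walk u v, colorChanges c w.edges = n})
      ⟨_, (hG.preconnected u v).some, rfl⟩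
    obtain ⟨a, b, ha, hb, hab⟩ := exists_mem_mem_dist_le_colorChanges w
    exact le_trans (Nat.sInf_le ⟨a, b, ha, hb, rfl⟩) (hw ▸ hab)
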